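/- arXiv:1411.7679 — 3 statements merged into one kernel-verified Lean document; each statement's English description precedes it below -/
import Mathlib

section
/- Let γ > 1. For real numbers a > 0, b > 0 (representing the densities ρ and ρ̄) and a', b' ∈ ℝ (representing their spatial derivatives), the following pointwise algebraic identity holds: (γ a^{γ-1} a' - (a/b) γ b^{γ-1} b') · (γ-1)(a^{γ-2} a' - b^{γ-2} b') = γ(γ-1) (a^{γ-3/2} a' - √a · b^{γ-2} b')². -/
open Real

/-! Writing `a^(γ-1) = a · a^(γ-2)`, `a^(γ-3/2) = √a · a^(γ-2)` and `b^(γ-1) = b · b^(γ-2)`, the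
first factor becomes `γ a (a^(γ-2) a' - b^(γ-2) b')`, a multiple of the second, and `a = (√a)²`. -/

theorem mul_sub_div_mul_eq_sq (γ a b a' b' x y : ℝ) (ha : 0 ≤ a) (hb : b ≠ 0) :
    (γ * (a * x) * a' - a / b * (γ * (b * y) * b')) * ((γ - 1) * (x * a' - y * b'))
      = γ * (γ - 1) * (√a * x * a' - √a * y * b') ^ 2 := by
  have hfirst : γ * (a * x) * a' - a / b * (γ * (b * y) * b') = γ * a * (x * a' - y * b') := by
    field_simp
  calc _ = γ * (γ - 1) * √a ^ 2 * (x * a' - y * b') ^ 2 := by rw [hfirst, sq_sqrt ha]; ring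
    _ = _ := by ring

theorem Real.rpow_sub_one_eq_mul {x : ℝ} (hx : x ≠ 0) (p : ℝ) : x ^ (p - 1) = x * x ^ (p - 2) := by
  rw [show p - 1 = p - 2 + 1 by ring, rpow_add_one hx, mul_comm]

theorem Real.rpow_sub_three_halves_eq_sqrt_mul {x : ℝ} (hx : 0 < x) (p : ℝ) :
    x ^ (p - 3 / 2) = √x * x ^ (p - 2) := by
  rw [show p - 3 / 2 = 1 / 2 + (p - 2) by ring, rpow_add hx, sqrt_eq_rpow]

theorem stmt_2_general (γ a b a' b' : ℝ) (ha : 0 < a) (hb : 0 < b) :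
    (γ * a ^ (γ - 1) * a' - (a / b) * (γ * b ^ (γ - 1) * b')) *
      ((γ - 1) * (a ^ (γ - 2) * a' - b ^ (γ - 2) * b'))
    = γ * (γ - 1) * (a ^ (γ - 3/2) * a' - Real.sqrt a * b ^ (γ - 2) * b') ^ 2 := by
  rw [rpow_sub_one_eq_mul ha.ne', rpow_sub_one_eq_mul hb.ne', rpow_sub_three_halves_eq_sqrt_mul ha]
  exact mul_sub_div_mul_eq_sq γ a b a' b' _ _ ha.le hb.ne'

/-- Pointwise perfect-square identity: for densities `a, b > 0` and derivatives `a', b'`,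
`(γ a^(γ-1) a' - (a/b) γ b^(γ-1) b') ⬝ (γ-1)(a^(γ-2) a' - b^(γ-2) b')
  = γ(γ-1) (a^(γ-3/2) a' - √a b^(γ-2) b')²`. -/
theorem stmt_2 (γ a b a' b' : ℝ) (hγ : 1 < γ) (ha : 0 < a) (hb : 0 < b) :
    (γ * a ^ (γ - 1) * a' - (a / b) * (γ * b ^ (γ - 1) * b')) *
      ((γ - 1) * (a ^ (γ - 2) * a' - b ^ (γ - 2) * b'))
    = γ * (γ - 1) * (a ^ (γ - 3/2) * a' - Real.sqrt a * b ^ (γ - 2) * b') ^ 2 :=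
  stmt_2_general γ a b a' b' ha hb
end

section
/- Let γ > 1 and let ρ̄ > 0 be fixed. There exist constants c₁, c₂ > 0 (depending on γ and ρ̄) such that for all R ≥ -ρ̄: F(ρ̄,R) ≥ c₁ R² when |R| ≤ ρ̄/2, and F(ρ̄,R) ≥ c₂ (R+ρ̄)^γ when R ≥ ρ̄ (equivalently when ρ = R+ρ̄ ≥ 2ρ̄). -/
/-!
`F(ρ̄, R)` is `1/γ` times the Bregman divergence of `x ↦ x ^ γ` between `ρ̄` and `ρ = R + ρ̄`.
On `[ρ̄/2, 3ρ̄/2]` the second derivative `γ (γ - 1) x ^ (γ - 2)` is bounded below, so `x ^ γ` is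
strongly convex there and its Bregman divergence dominates a multiple of `R ^ 2`. For `ρ ≥ 2ρ̄`,
the tangent of `x ^ γ` at `2ρ̄` shows that the tangent at `ρ̄` stays below `(1 + γ) / 2 ^ γ · ρ ^ γ`,
and `(1 + γ) / 2 ^ γ < 1` by Bernoulli's inequality.
-/

open Real Set

theorem ConvexOn.add_mul_sub_le_of_hasDerivAt {S : Set ℝ} {f : ℝ → ℝ} {f' x y : ℝ}
    (hf : ConvexOn ℝ S f) (hx : x ∈ S) (hy : y ∈ S) (hf' : HasDerivAt f f' x) :
    f x + f' * (y - x) ≤ f y := by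
  rcases lt_trichotomy x y with hxy | rfl | hyx
  · have h := hf.le_slope_of_hasDerivAt hx hy hxy hf'
    rw [slope_def_field, le_div_iff₀ (sub_pos.2 hxy)] at h
    linarith
  · simp
  · have h := hf.slope_le_of_hasDerivAt hy hx hyx hf'
    rw [slope_def_field, div_le_iff₀ (sub_pos.2 hyx)] at h
    linarith

theorem StrongConvexOn.mul_sq_le_sub_sub_mul_of_hasDerivAt {S : Set ℝ} {m : ℝ} {f : ℝ → ℝ}
    {f' x y : ℝ} (hf : StrongConvexOn S m f) (hx : x ∈ S) (hy : y ∈ S)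
    (hf' : HasDerivAt f f' x) :
    m / 2 * (y - x) ^ 2 ≤ f y - f x - f' * (y - x) := by
  rw [strongConvexOn_iff_convex] at hf
  simp only [Real.norm_eq_abs, sq_abs] at hf
  have hg' : HasDerivAt (fun z ↦ f z - m / 2 * z ^ 2) (f' - m / 2 * (2 * x)) x := by
    simpa using hf'.fun_sub ((hasDerivAt_pow 2 x).const_mul (m / 2))
  linarith [hf.add_mul_sub_le_of_hasDerivAt hx hy hg']

theorem min_rpow_le_rpow_of_mem_Icc {p a b x : ℝ} (ha : 0 < a) (hx : x ∈ Icc a b) :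
    min (a ^ p) (b ^ p) ≤ x ^ p := by
  rcases le_total 0 p with hp | hp
  · exact (min_le_left _ _).trans (rpow_le_rpow ha.le hx.1 hp)
  · exact (min_le_right _ _).trans (rpow_le_rpow_of_nonpos (ha.trans_le hx.1) hx.2 hp)

theorem strongConvexOn_rpow_Icc {γ a b : ℝ} (hγ : 1 ≤ γ) (ha : 0 < a) :
    StrongConvexOn (Icc a b) (γ * (γ - 1) * min (a ^ (γ - 2)) (b ^ (γ - 2)))
      (fun x ↦ x ^ γ) := by
  set m := γ * (γ - 1) * min (a ^ (γ - 2)) (b ^ (γ - 2))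
  rw [strongConvexOn_iff_convex]
  simp only [Real.norm_eq_abs, sq_abs]
  have hderiv : ∀ x, HasDerivAt (fun x : ℝ ↦ x ^ γ - m / 2 * x ^ 2) (γ * x ^ (γ - 1) - m * x) x :=
    fun x ↦ ((hasDerivAt_rpow_const (Or.inr hγ)).fun_sub
      ((hasDerivAt_pow 2 x).const_mul (m / 2))).congr_deriv (by push_cast; ring)
  have hderiv2 : ∀ x ∈ Icc a b, HasDerivAt (fun x : ℝ ↦ γ * x ^ (γ - 1) - m * x)
      (γ * ((γ - 1) * x ^ (γ - 2)) - m) x := fun x hx ↦ by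
    have hx0 : x ≠ 0 := (ha.trans_le hx.1).ne'
    simpa [sub_sub, one_add_one_eq_two] using
      ((hasDerivAt_rpow_const (p := γ - 1) (Or.inl hx0)).const_mul γ).fun_sub
        ((hasDerivAt_id x).const_mul m)
  have hd : deriv (fun x : ℝ ↦ x ^ γ - m / 2 * x ^ 2) = fun x ↦ γ * x ^ (γ - 1) - m * x :=
    funext fun x ↦ (hderiv x).deriv
  refine convexOn_of_deriv2_nonneg' (convex_Icc a b)
    (fun x _ ↦ (hderiv x).differentiableAt.differentiableWithinAt)
    (hd ▸ fun x hx ↦ (hderiv2 x hx).differentiableAt.differentiableWithinAt) fun x hx ↦ ?_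
  rw [Function.iterate_succ_apply, Function.iterate_one, hd, (hderiv2 x hx).deriv]
  have := mul_le_mul_of_nonneg_left (min_rpow_le_rpow_of_mem_Icc (p := γ - 2) ha hx)
    (mul_nonneg (by linarith : (0 : ℝ) ≤ γ) (sub_nonneg.2 hγ))
  linarith

noncomputable def rpowBregman (γ s t : ℝ) : ℝ := t ^ γ - s ^ γ - γ * s ^ (γ - 1) * (t - s)

theorem mul_sq_le_rpowBregman {γ a b s t : ℝ} (hγ : 1 ≤ γ) (ha : 0 < a) (hs : s ∈ Icc a b)
    (ht : t ∈ Icc a b) :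
    γ * (γ - 1) * min (a ^ (γ - 2)) (b ^ (γ - 2)) / 2 * (t - s) ^ 2 ≤ rpowBregman γ s t :=
  (strongConvexOn_rpow_Icc hγ ha).mul_sq_le_sub_sub_mul_of_hasDerivAt hs ht
    (hasDerivAt_rpow_const (Or.inr hγ))

theorem mul_rpow_le_rpowBregman {γ s t : ℝ} (hγ : 1 ≤ γ) (hs : 0 < s) (ht : 2 * s ≤ t) :
    (1 - (1 + γ) / 2 ^ γ) * t ^ γ ≤ rpowBregman γ s t := by
  have h2s : 0 < 2 * s := by positivity
  have hA : (0 : ℝ) < 2 ^ γ := by positivity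
  have hsγ : s ^ γ = s * s ^ (γ - 1) := by rw [rpow_sub_one hs.ne']; field_simp
  have h2sγ : (2 * s) ^ γ = 2 ^ γ * s ^ γ := mul_rpow zero_le_two hs.le
  have h2sγ' : (2 * s) ^ (γ - 1) = 2 ^ γ * s ^ (γ - 1) / 2 := by
    rw [rpow_sub_one h2s.ne', h2sγ, hsγ]; field_simp
  have htangent := (convexOn_rpow hγ).add_mul_sub_le_of_hasDerivAt h2s.le
    (h2s.le.trans ht : (0 : ℝ) ≤ t) (hasDerivAt_rpow_const (x := 2 * s) (Or.inr hγ))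
  rw [h2sγ, h2sγ', hsγ] at htangent
  have hgap : 0 ≤ γ * (2 ^ γ * s ^ (γ - 1) * (γ - 1) * (t - 2 * s)) := by
    have := sub_nonneg.2 hγ; have := sub_nonneg.2 ht; positivity
  have key : 2 ^ γ * (s * s ^ (γ - 1) + γ * s ^ (γ - 1) * (t - s)) ≤ (1 + γ) * t ^ γ := by
    nlinarith [mul_le_mul_of_nonneg_left htangent (by linarith : (0 : ℝ) ≤ 1 + γ)]
  rw [← le_div_iff₀' hA] at key
  rw [rpowBregman, hsγ]
  linear_combination key

/-- Coercivity of the relative pressure `F(ρ̄,R)`: there are `c₁, c₂ > 0` with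
`F(ρ̄,R) ≥ c₁ R²` for `|R| ≤ ρ̄/2` and `F(ρ̄,R) ≥ c₂ (R+ρ̄)^γ` for `R ≥ ρ̄`. -/
theorem stmt_3 (γ ρb : ℝ) (hγ : 1 < γ) (hρb : 0 < ρb) :
    ∃ c₁ c₂ : ℝ, 0 < c₁ ∧ 0 < c₂ ∧
      ∀ R : ℝ, -ρb ≤ R →
        ((|R| ≤ ρb / 2 →
            c₁ * R ^ 2 ≤ (1/γ) * (R + ρb) ^ γ - ρb ^ (γ - 1) * R - (1/γ) * ρb ^ γ) ∧
         (ρb ≤ R →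
            c₂ * (R + ρb) ^ γ ≤ (1/γ) * (R + ρb) ^ γ - ρb ^ (γ - 1) * R - (1/γ) * ρb ^ γ)) := by
  have hγ0 : 0 < γ := by linarith
  have hF : ∀ R : ℝ, (1/γ) * (R + ρb) ^ γ - ρb ^ (γ - 1) * R - (1/γ) * ρb ^ γ
      = rpowBregman γ ρb (R + ρb) / γ := fun R ↦ by
    rw [rpowBregman]; field_simp; ring
  set m := min ((ρb / 2) ^ (γ - 2)) ((3 * ρb / 2) ^ (γ - 2))
  have hm : 0 < m := lt_min (by positivity) (by positivity)
  have h2γ : 1 + γ < 2 ^ γ := by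
    simpa [one_add_one_eq_two] using
      one_add_mul_self_lt_rpow_one_add (s := 1) (by norm_num) one_ne_zero hγ
  refine ⟨(γ - 1) * m / 2, (1 - (1 + γ) / 2 ^ γ) / γ, by nlinarith,
    div_pos (sub_pos.2 ((div_lt_one (by positivity)).2 h2γ)) hγ0, fun R _ ↦ ⟨?_, ?_⟩⟩
  · intro hRabs
    obtain ⟨hR₁, hR₂⟩ := abs_le.1 hRabs
    have := mul_sq_le_rpowBregman (a := ρb / 2) (b := 3 * ρb / 2) (s := ρb) (t := R + ρb) hγ.le
      (by positivity) ⟨by linarith, by linarith⟩ ⟨by linarith, by linarith⟩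
    rw [hF, le_div_iff₀ hγ0]
    linear_combination this
  · intro hR
    rw [hF, div_mul_eq_mul_div, div_le_div_iff_of_pos_right hγ0]
    exact mul_rpow_le_rpowBregman hγ.le hρb (by linarith)
end

section
/- Let μ > 0, γ > 1, a > 0, and let (ρ,u) be a C² solution with ρ > 0 of the 1D compressible Navier-Stokes system ∂_t ρ + ∂_x(ρu) = 0, ∂_t(ρu) + ∂_x(ρu²) - ∂_x(μρ^γ ∂_x u) + ∂_x(aρ^γ) = 0. Define v = u + (μ/(γ-1)) ∂_x(ρ^{γ-1}). Then v satisfies the damped transport (Euler-type) equation ρ ∂_t v + ρ u ∂_x v + ∂_x(a ρ^γ) = 0 pointwise. -/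
/-!
Put `φ(ρ) = μ ρ^(γ-1) / (γ-1)`, so that `ρ² φ'(ρ) = μ ρ^γ`, and `D = ∂ₜ + u ∂ₓ`. The continuity
equation gives `D φ(ρ) = -ρ φ'(ρ) ∂ₓu = -μ ρ^(γ-1) ∂ₓu`. Differentiating in `x` (the mixed partials
of `φ(ρ)` commute) yields `ρ D (∂ₓ φ(ρ)) = -ρ ∂ₓ(μ ρ^(γ-1) ∂ₓu) - ρ φ'(ρ) ∂ₓρ ∂ₓu = -∂ₓ(μ ρ^γ ∂ₓu)`,
which cancels the viscous term of the momentum equation in its non-conservative form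
`ρ D u = ∂ₓ(μ ρ^γ ∂ₓu) - ∂ₓ(a ρ^γ)`.
-/

open Real Function

section PartialDerivatives

variable {E : Type*} [NormedAddCommGroup E] [NormedSpace ℝ E]

noncomputable def timeDeriv (f : ℝ → ℝ → E) (t x : ℝ) : E := deriv (fun s => f s x) t

noncomputable def spaceDeriv (f : ℝ → ℝ → E) (t x : ℝ) : E := deriv (fun y => f t y) x

prefix:max "∂ₜ" => timeDeriv
prefix:max "∂ₓ" => spaceDeriv

variable {f : ℝ → ℝ → E}

theorem hasDerivAt_timeDeriv {t x : ℝ} (hf : DifferentiableAt ℝ (uncurry f) (t, x)) :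
    HasDerivAt (fun s => f s x) (∂ₜ f t x) t := by
  have hslice : DifferentiableAt ℝ (fun s => uncurry f (s, x)) t :=
    hf.comp (f := fun s => (s, x)) t (differentiableAt_id.prodMk (differentiableAt_const x))
  exact hslice.hasDerivAt

theorem hasDerivAt_spaceDeriv {t x : ℝ} (hf : DifferentiableAt ℝ (uncurry f) (t, x)) :
    HasDerivAt (fun y => f t y) (∂ₓ f t x) x := by
  have hslice : DifferentiableAt ℝ (fun y => uncurry f (t, y)) x :=
    hf.comp (f := fun y => (t, y)) x ((differentiableAt_const t).prodMk differentiableAt_id)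
  exact hslice.hasDerivAt

theorem timeDeriv_eq_fderiv {t x : ℝ} (hf : DifferentiableAt ℝ (uncurry f) (t, x)) :
    ∂ₜ f t x = fderiv ℝ (uncurry f) (t, x) (1, 0) := by
  have hcurve : HasDerivAt (fun s : ℝ => (s, x)) ((1, 0) : ℝ × ℝ) t :=
    (hasDerivAt_id t).prodMk (hasDerivAt_const t x)
  exact (hf.hasFDerivAt.comp_hasDerivAt t hcurve).deriv

theorem spaceDeriv_eq_fderiv {t x : ℝ} (hf : DifferentiableAt ℝ (uncurry f) (t, x)) :
    ∂ₓ f t x = fderiv ℝ (uncurry f) (t, x) (0, 1) := by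
  have hcurve : HasDerivAt (fun y : ℝ => (t, y)) ((0, 1) : ℝ × ℝ) x :=
    (hasDerivAt_const x t).prodMk (hasDerivAt_id x)
  exact (hf.hasFDerivAt.comp_hasDerivAt x hcurve).deriv

theorem uncurry_timeDeriv (hf : Differentiable ℝ (uncurry f)) :
    uncurry (∂ₜ f) = fun p => fderiv ℝ (uncurry f) p (1, 0) :=
  funext fun p => timeDeriv_eq_fderiv (hf p)

theorem uncurry_spaceDeriv (hf : Differentiable ℝ (uncurry f)) :
    uncurry (∂ₓ f) = fun p => fderiv ℝ (uncurry f) p (0, 1) :=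
  funext fun p => spaceDeriv_eq_fderiv (hf p)

theorem ContDiff.uncurry_timeDeriv {n : WithTop ℕ∞} (hf : ContDiff ℝ (n + 1) (uncurry f)) :
    ContDiff ℝ n (uncurry (∂ₜ f)) := by
  rw [_root_.uncurry_timeDeriv (hf.differentiable (by simp))]
  exact (hf.fderiv_right le_rfl).clm_apply contDiff_const

theorem ContDiff.uncurry_spaceDeriv {n : WithTop ℕ∞} (hf : ContDiff ℝ (n + 1) (uncurry f)) :
    ContDiff ℝ n (uncurry (∂ₓ f)) := by
  rw [_root_.uncurry_spaceDeriv (hf.differentiable (by simp))]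
  exact (hf.fderiv_right le_rfl).clm_apply contDiff_const

theorem fderiv_fderiv_apply {G : Type*} [NormedAddCommGroup G] [NormedSpace ℝ G] {F : G → E}
    {p : G} (hF : DifferentiableAt ℝ (fderiv ℝ F) p) (v w : G) :
    fderiv ℝ (fun q => fderiv ℝ F q w) p v = fderiv ℝ (fderiv ℝ F) p v w := by
  rw [fderiv_clm_apply hF (differentiableAt_const w)]
  simp

theorem timeDeriv_spaceDeriv (hf : ContDiff ℝ 2 (uncurry f)) : ∂ₜ (∂ₓ f) = ∂ₓ (∂ₜ f) := by
  have hdf : Differentiable ℝ (uncurry f) := hf.differentiable two_ne_zero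
  have hd2f := (hf.fderiv_right (m := 1) le_rfl).differentiable one_ne_zero
  ext t x
  rw [timeDeriv_eq_fderiv ((hf.uncurry_spaceDeriv (n := 1)).differentiable one_ne_zero _),
    spaceDeriv_eq_fderiv ((hf.uncurry_timeDeriv (n := 1)).differentiable one_ne_zero _),
    uncurry_spaceDeriv hdf, uncurry_timeDeriv hdf,
    fderiv_fderiv_apply (hd2f _), fderiv_fderiv_apply (hd2f _)]
  exact (hf.contDiffAt.isSymmSndFDerivAt (by simp)) _ _

end PartialDerivatives

noncomputable def materialDeriv (b f : ℝ → ℝ → ℝ) (t x : ℝ) : ℝ := ∂ₜ f t x + b t x * ∂ₓ f t x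

section MaterialDerivative

variable {ρ u : ℝ → ℝ → ℝ}

theorem spaceDeriv_const_mul (c : ℝ) (f : ℝ → ℝ → ℝ) (t x : ℝ) :
    ∂ₓ (fun s y => c * f s y) t x = c * ∂ₓ f t x :=
  deriv_const_mul_field c

theorem materialDeriv_add_const_mul {b w v : ℝ → ℝ → ℝ} (c : ℝ) (hu : Differentiable ℝ (uncurry u))
    (hw : Differentiable ℝ (uncurry w)) (hv : ∀ s y, v s y = u s y + c * w s y) (t x : ℝ) :
    materialDeriv b v t x = materialDeriv b u t x + c * materialDeriv b w t x := by
  obtain rfl : v = fun s y => u s y + c * w s y := funext₂ hv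
  have ht : ∂ₜ (fun s y => u s y + c * w s y) t x = ∂ₜ u t x + c * ∂ₜ w t x :=
    ((hasDerivAt_timeDeriv (hu (t, x))).add ((hasDerivAt_timeDeriv (hw (t, x))).const_mul c)).deriv
  have hx : ∂ₓ (fun s y => u s y + c * w s y) t x = ∂ₓ u t x + c * ∂ₓ w t x :=
    ((hasDerivAt_spaceDeriv (hu (t, x))).add ((hasDerivAt_spaceDeriv (hw (t, x))).const_mul c)).deriv
  rw [materialDeriv, materialDeriv, materialDeriv, ht, hx]
  ring

theorem timeDeriv_mul_add_spaceDeriv_mul_sq (hρ : Differentiable ℝ (uncurry ρ))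
    (hu : Differentiable ℝ (uncurry u)) {t x : ℝ}
    (hmass : ∂ₜ ρ t x + ∂ₓ (fun s y => ρ s y * u s y) t x = 0) :
    ∂ₜ (fun s y => ρ s y * u s y) t x + ∂ₓ (fun s y => ρ s y * u s y ^ 2) t x
      = ρ t x * materialDeriv u u t x := by
  have ht : ∂ₜ (fun s y => ρ s y * u s y) t x = ∂ₜ ρ t x * u t x + ρ t x * ∂ₜ u t x :=
    ((hasDerivAt_timeDeriv (hρ (t, x))).mul (hasDerivAt_timeDeriv (hu (t, x)))).deriv
  have hx2 : ∂ₓ (fun s y => ρ s y * u s y ^ 2) t x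
      = ∂ₓ ρ t x * u t x ^ 2 + ρ t x * (↑(2 : ℕ) * u t x ^ (2 - 1) * ∂ₓ u t x) :=
    ((hasDerivAt_spaceDeriv (hρ (t, x))).mul ((hasDerivAt_spaceDeriv (hu (t, x))).pow 2)).deriv
  have hx : ∂ₓ (fun s y => ρ s y * u s y) t x = ∂ₓ ρ t x * u t x + ρ t x * ∂ₓ u t x :=
    ((hasDerivAt_spaceDeriv (hρ (t, x))).mul (hasDerivAt_spaceDeriv (hu (t, x)))).deriv
  rw [hx] at hmass
  rw [materialDeriv, ht, hx2]
  push_cast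
  linear_combination u t x * hmass

theorem materialDeriv_rpow (p : ℝ) (hρ : Differentiable ℝ (uncurry ρ))
    (hu : Differentiable ℝ (uncurry u)) {t x : ℝ} (hpos : 0 < ρ t x)
    (hmass : ∂ₜ ρ t x + ∂ₓ (fun s y => ρ s y * u s y) t x = 0) :
    materialDeriv u (fun s y => ρ s y ^ p) t x = -(p * (ρ t x ^ p * ∂ₓ u t x)) := by
  have ht : ∂ₜ (fun s y => ρ s y ^ p) t x = ∂ₜ ρ t x * p * ρ t x ^ (p - 1) :=
    ((hasDerivAt_timeDeriv (hρ (t, x))).rpow_const (Or.inl hpos.ne')).deriv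
  have hx : ∂ₓ (fun s y => ρ s y ^ p) t x = ∂ₓ ρ t x * p * ρ t x ^ (p - 1) :=
    ((hasDerivAt_spaceDeriv (hρ (t, x))).rpow_const (Or.inl hpos.ne')).deriv
  have hflux : ∂ₓ (fun s y => ρ s y * u s y) t x = ∂ₓ ρ t x * u t x + ρ t x * ∂ₓ u t x :=
    ((hasDerivAt_spaceDeriv (hρ (t, x))).mul (hasDerivAt_spaceDeriv (hu (t, x)))).deriv
  have hpow : ρ t x ^ (p - 1) * ρ t x = ρ t x ^ p := by
    rw [rpow_sub_one hpos.ne', div_mul_cancel₀ _ hpos.ne']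
  rw [materialDeriv, ht, hx, ← hpow]
  rw [hflux] at hmass
  linear_combination p * ρ t x ^ (p - 1) * hmass

theorem materialDeriv_spaceDeriv {g : ℝ → ℝ → ℝ} (hg : ContDiff ℝ 2 (uncurry g))
    (hu : Differentiable ℝ (uncurry u)) (t x : ℝ) :
    materialDeriv u (∂ₓ g) t x = ∂ₓ (materialDeriv u g) t x - ∂ₓ u t x * ∂ₓ g t x := by
  have hgt := (hg.uncurry_timeDeriv (n := 1)).differentiable one_ne_zero
  have hgx := (hg.uncurry_spaceDeriv (n := 1)).differentiable one_ne_zero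
  have hx : ∂ₓ (materialDeriv u g) t x
      = ∂ₓ (∂ₜ g) t x + (∂ₓ u t x * ∂ₓ g t x + u t x * ∂ₓ (∂ₓ g) t x) :=
    ((hasDerivAt_spaceDeriv (hgt (t, x))).add
      ((hasDerivAt_spaceDeriv (hu (t, x))).mul (hasDerivAt_spaceDeriv (hgx (t, x))))).deriv
  rw [materialDeriv, hx, timeDeriv_spaceDeriv hg]
  ring

theorem materialDeriv_spaceDeriv_rpow (p : ℝ) (hρ : ContDiff ℝ 2 (uncurry ρ))
    (hu : Differentiable ℝ (uncurry u)) (hpos : ∀ s y, 0 < ρ s y)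
    (hmass : ∀ s y, ∂ₜ ρ s y + ∂ₓ (fun s y => ρ s y * u s y) s y = 0) (t x : ℝ) :
    materialDeriv u (∂ₓ fun s y => ρ s y ^ p) t x
      = -(p * ∂ₓ (fun s y => ρ s y ^ p * ∂ₓ u s y) t x)
        - ∂ₓ u t x * ∂ₓ (fun s y => ρ s y ^ p) t x := by
  have hDφ : materialDeriv u (fun s y => ρ s y ^ p)
      = fun s y => -p * (ρ s y ^ p * ∂ₓ u s y) := by
    ext s y
    rw [materialDeriv_rpow p (hρ.differentiable two_ne_zero) hu (hpos s y) (hmass s y)]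
    ring
  rw [materialDeriv_spaceDeriv (hρ.rpow_const_of_ne fun q => (hpos q.1 q.2).ne') hu, hDφ,
    spaceDeriv_const_mul]
  ring

theorem spaceDeriv_const_mul_rpow_mul {f : ℝ → ℝ → ℝ} (μ : ℝ) {γ : ℝ} (hγ : γ ≠ 1)
    (hρ : Differentiable ℝ (uncurry ρ)) (hf : Differentiable ℝ (uncurry f)) {t x : ℝ}
    (hpos : 0 < ρ t x) :
    ∂ₓ (fun s y => μ * ρ s y ^ γ * f s y) t x
      = μ * ρ t x * ∂ₓ (fun s y => ρ s y ^ (γ - 1) * f s y) t x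
        + μ / (γ - 1) * ρ t x * ∂ₓ (fun s y => ρ s y ^ (γ - 1)) t x * f t x := by
  have hρx := hasDerivAt_spaceDeriv (hρ (t, x))
  have hfx := hasDerivAt_spaceDeriv (hf (t, x))
  have hl : ∂ₓ (fun s y => μ * ρ s y ^ γ * f s y) t x
      = μ * (∂ₓ ρ t x * γ * ρ t x ^ (γ - 1)) * f t x + μ * ρ t x ^ γ * ∂ₓ f t x :=
    (((hρx.rpow_const (Or.inl hpos.ne')).const_mul μ).mul hfx).deriv
  have hr : ∂ₓ (fun s y => ρ s y ^ (γ - 1) * f s y) t x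
      = ∂ₓ ρ t x * (γ - 1) * ρ t x ^ (γ - 1 - 1) * f t x + ρ t x ^ (γ - 1) * ∂ₓ f t x :=
    ((hρx.rpow_const (Or.inl hpos.ne')).mul hfx).deriv
  have hg : ∂ₓ (fun s y => ρ s y ^ (γ - 1)) t x = ∂ₓ ρ t x * (γ - 1) * ρ t x ^ (γ - 1 - 1) :=
    (hρx.rpow_const (Or.inl hpos.ne')).deriv
  have hpow₁ : ρ t x * ρ t x ^ (γ - 1 - 1) = ρ t x ^ (γ - 1) := by
    rw [rpow_sub_one hpos.ne', mul_div_cancel₀ _ hpos.ne']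
  have hpow₂ : ρ t x * ρ t x ^ (γ - 1) = ρ t x ^ γ := by
    rw [rpow_sub_one hpos.ne', mul_div_cancel₀ _ hpos.ne']
  have hc : μ / (γ - 1) * (γ - 1) = μ := div_mul_cancel₀ μ (sub_ne_zero.mpr hγ)
  rw [hl, hr, hg]
  linear_combination (-(μ * γ * ∂ₓ ρ t x * f t x)) * hpow₁ - μ * ∂ₓ f t x * hpow₂
    - ∂ₓ ρ t x * (ρ t x * ρ t x ^ (γ - 1 - 1)) * f t x * hc

end MaterialDerivative

theorem stmt_5_general (μ γ a : ℝ) (hγ : 1 < γ)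
    (ρ u v : ℝ → ℝ → ℝ)
    (hρ : ContDiff ℝ 2 (Function.uncurry ρ)) (hu : ContDiff ℝ 2 (Function.uncurry u))
    (hρpos : ∀ t x, 0 < ρ t x)
    (hmass : ∀ t x, deriv (fun s => ρ s x) t + deriv (fun y => ρ t y * u t y) x = 0)
    (hmom : ∀ t x,
      deriv (fun s => ρ s x * u s x) t
        + deriv (fun y => ρ t y * u t y ^ 2) x
        - deriv (fun y => μ * ρ t y ^ γ * deriv (fun z => u t z) y) x
        + deriv (fun y => a * ρ t y ^ γ) x = 0)
    (hv : ∀ t x, v t x = u t x + (μ / (γ - 1)) * deriv (fun y => ρ t y ^ (γ - 1)) x) :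
    ∀ t x,
      ρ t x * deriv (fun s => v s x) t + ρ t x * u t x * deriv (fun y => v t y) x
        + deriv (fun y => a * ρ t y ^ γ) x = 0 := by
  intro t x
  have hρ₁ := hρ.differentiable two_ne_zero
  have hu₁ := hu.differentiable two_ne_zero
  have hux := (hu.uncurry_spaceDeriv (n := 1)).differentiable one_ne_zero
  have hφ : ContDiff ℝ 2 (uncurry fun s y => ρ s y ^ (γ - 1)) :=
    hρ.rpow_const_of_ne fun q => (hρpos q.1 q.2).ne'
  have hφx := (hφ.uncurry_spaceDeriv (n := 1)).differentiable one_ne_zero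
  have hmom₀ : ∂ₜ (fun s y => ρ s y * u s y) t x + ∂ₓ (fun s y => ρ s y * u s y ^ 2) t x
      - ∂ₓ (fun s y => μ * ρ s y ^ γ * ∂ₓ u s y) t x + ∂ₓ (fun s y => a * ρ s y ^ γ) t x = 0 :=
    hmom t x
  have hDv : ∂ₜ v t x + u t x * ∂ₓ v t x = materialDeriv u u t x
      + μ / (γ - 1) * materialDeriv u (∂ₓ fun s y => ρ s y ^ (γ - 1)) t x :=
    materialDeriv_add_const_mul _ hu₁ hφx hv t x
  have hDw := materialDeriv_spaceDeriv_rpow (γ - 1) hρ hu₁ hρpos hmass t x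
  have hvisc := spaceDeriv_const_mul_rpow_mul μ hγ.ne' hρ₁ hux (hρpos t x)
  have hc : μ / (γ - 1) * (γ - 1) = μ := div_mul_cancel₀ μ (sub_ne_zero.mpr hγ.ne')
  change ρ t x * ∂ₜ v t x + ρ t x * u t x * ∂ₓ v t x + ∂ₓ (fun s y => a * ρ s y ^ γ) t x = 0
  linear_combination ρ t x * hDv + μ / (γ - 1) * ρ t x * hDw + hmom₀ + hvisc
    - timeDeriv_mul_add_spaceDeriv_mul_sq hρ₁ hu₁ (hmass t x)
    - ρ t x * ∂ₓ (fun s y => ρ s y ^ (γ - 1) * ∂ₓ u s y) t x * hc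

/-- For smooth positive solutions of 1D compressible Navier-Stokes with viscosity `μρ^γ` and
pressure `aρ^γ`, the effective velocity `v = u + (μ/(γ-1)) ∂ₓ(ρ^(γ-1))` satisfies the
transport equation `ρ ∂ₜv + ρ u ∂ₓv + ∂ₓ(aρ^γ) = 0`. -/
theorem stmt_5 (μ γ a : ℝ) (hμ : 0 < μ) (hγ : 1 < γ) (ha : 0 < a)
    (ρ u v : ℝ → ℝ → ℝ)
    (hρ : ContDiff ℝ 2 (Function.uncurry ρ)) (hu : ContDiff ℝ 2 (Function.uncurry u))
    (hρpos : ∀ t x, 0 < ρ t x)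
    (hmass : ∀ t x, deriv (fun s => ρ s x) t + deriv (fun y => ρ t y * u t y) x = 0)
    (hmom : ∀ t x,
      deriv (fun s => ρ s x * u s x) t
        + deriv (fun y => ρ t y * u t y ^ 2) x
        - deriv (fun y => μ * ρ t y ^ γ * deriv (fun z => u t z) y) x
        + deriv (fun y => a * ρ t y ^ γ) x = 0)
    (hv : ∀ t x, v t x = u t x + (μ / (γ - 1)) * deriv (fun y => ρ t y ^ (γ - 1)) x) :
    ∀ t x,
      ρ t x * deriv (fun s => v s x) t + ρ t x * u t x * deriv (fun y => v t y) x
        + deriv (fun y => a * ρ t y ^ γ) x = 0 :=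
  stmt_5_general μ γ a hγ ρ u v hρ hu hρpos hmass hmom hv
end
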